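/- Let ℓ ≥ 5 be an integer and S a (2^ℓ − 1)-periodic binary sequence whose linear complexity is at most 3ℓ (as is the case for 3-term trace sequences). Then there exists an integer k with 1 < k ≤ 9 such that S has a full peak in the periodic correlation measure of order k, i.e. θ_k(S) = 2^ℓ − 1. -/

import Mathlib

open Finset

/-- The first `N` terms of the binary sequence `s` satisfy a linear recurrence of order `L`
over `F₂`: `s (i+L) = c_{L-1} s (i+L-1) + … + c_0 s i` for `0 ≤ i < N - L`. -/
def IsLinRecOn (s : ℕ → ZMod 2) (N L : ℕ) : Prop :=
  ∃ c : Fin L → ZMod 2, ∀ i, i + L < N → s (i + L) = ∑ j : Fin L, c j * s (i + j)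

/-- The `N`th linear complexity of a binary sequence `s`: the smallest positive `L` such that
the first `N` terms satisfy a linear recurrence of order `L`, with the convention that it is `0`
when the first `N` terms all vanish. -/
noncomputable def linComplexity (s : ℕ → ZMod 2) (N : ℕ) : ℕ :=
  if ∀ i < N, s i = 0 then 0 else sInf {L | 0 < L ∧ IsLinRecOn s N L}

/-- The `N`th (aperiodic) correlation measure of order `k` of a binary sequence `s`:
`max_{U,D} |∑_{n=0}^{U-1} (-1)^{s_{n+d₁}+…+s_{n+d_k}}|` over `U ≤ N - k + 1` and
`0 ≤ d₁ < … < d_k ≤ N - U`. -/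
noncomputable def corr (s : ℕ → ZMod 2) (N k : ℕ) : ℕ :=
  sSup {m : ℕ | ∃ (U : ℕ) (d : Fin k → ℕ), U + k ≤ N + 1 ∧ StrictMono d ∧
    (∀ j, d j + U ≤ N) ∧
    m = (∑ n ∈ range U, (-1 : ℤ) ^ (∑ j : Fin k, (s (n + d j)).val)).natAbs}

/-- The periodic correlation measure of order `k` of a `T`-periodic binary sequence `s`:
`max_D |∑_{n=0}^{T-1} (-1)^{s_{n+d₁}+…+s_{n+d_k}}|` over `0 ≤ d₁ < … < d_k < T`. -/
noncomputable def pcorr (s : ℕ → ZMod 2) (T k : ℕ) : ℕ :=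
  sSup {m : ℕ | ∃ d : Fin k → ℕ, StrictMono d ∧ (∀ j, d j < T) ∧
    m = (∑ n ∈ range T, (-1 : ℤ) ^ (∑ j : Fin k, (s (n + d j)).val)).natAbs}

/-- The first `N` terms of `s` are generated by a (not necessarily linear) recurrence of
order `M`. -/
def IsMaxRecOn (s : ℕ → ZMod 2) (N M : ℕ) : Prop :=
  ∃ f : (Fin M → ZMod 2) → ZMod 2, ∀ i, i + M < N → s (i + M) = f (fun j => s (i + j))

/-- The `N`th maximum-order complexity of a binary sequence `s`. -/
noncomputable def maxOrderComplexity (s : ℕ → ZMod 2) (N : ℕ) : ℕ :=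
  sInf {M | 0 < M ∧ IsMaxRecOn s N M}

/-!
A sequence satisfying a linear recurrence of order `L` over `𝔽₂` is determined by its first `L`
terms, and so is every sum of shifts `n ↦ ∑_{d ∈ D} s (n + d)`, since these satisfy the same
recurrence. By periodicity the recurrence holds everywhere once it holds on two periods, so when
there are more than `2 ^ L` sets `D ⊆ [0, T)` of size `3` or `4` (that is, `binom(2^ℓ, 4) > 2^(3ℓ)`),
two of them, `D₁ ≠ D₂`, give the same sum of shifts. Over `𝔽₂` the sum of shifts over the
symmetric difference `D₁ ∆ D₂`, of size at most `8`, then vanishes identically, which is a full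
peak of order `#(D₁ ∆ D₂)`; if that order is `1`, then `s = 0` and every order gives a peak.
-/

open Function
open scoped symmDiff

theorem Finset.sum_symmDiff {ι R : Type*} [DecidableEq ι] [Semiring R] [CharP R 2]
    (s t : Finset ι) (f : ι → R) : ∑ i ∈ s ∆ t, f i = ∑ i ∈ s, f i + ∑ i ∈ t, f i := by
  have hunion : s ∪ t = s ∆ t ∪ s ∩ t := (symmDiff_sup_inf s t).symm
  have hdisj : Disjoint (s ∆ t) (s ∩ t) := disjoint_symmDiff_inf s t
  rw [← sum_union_inter, hunion, sum_union hdisj, add_assoc, CharTwo.add_self_eq_zero, add_zero]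

namespace LinearRecurrence

variable {R : Type*} [CommSemiring R] {E : LinearRecurrence R} {u : ℕ → R}

theorem IsSolution.comp_add_right (hu : E.IsSolution u) (d : ℕ) :
    E.IsSolution fun n => u (n + d) := fun n => by
  simpa only [add_right_comm] using hu (n + d)

theorem IsSolution.sum_shift (hu : E.IsSolution u) (D : Finset ℕ) :
    E.IsSolution fun n => ∑ d ∈ D, u (n + d) := by
  rw [is_sol_iff_mem_solSpace, ← sum_fn]
  exact E.solSpace.sum_mem fun d _ => hu.comp_add_right d

theorem isSolution_of_periodic {T : ℕ} (hu : Periodic u T) (hT : 0 < T)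
    (h : ∀ i < T, u (i + E.order) = ∑ j, E.coeffs j * u (i + j)) : E.IsSolution u := by
  intro n
  have hmod : ∀ m, u (n + m) = u (n % T + m) := fun m => by
    rw [← hu.map_mod_nat (n % T + m), Nat.mod_add_mod, hu.map_mod_nat]
  simp only [hmod]
  exact h _ (Nat.mod_lt _ hT)

/-- Pigeonhole on the first `E.order` values, which determine a sum of shifts of `s`. -/
theorem IsSolution.exists_ne_sum_symmDiff_eq_zero {E : LinearRecurrence (ZMod 2)}
    {s : ℕ → ZMod 2} (hs : E.IsSolution s) {A : Finset (Finset ℕ)} (hA : 2 ^ E.order < #A) :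
    ∃ D₁ ∈ A, ∃ D₂ ∈ A, D₁ ≠ D₂ ∧ ∀ n, ∑ d ∈ D₁ ∆ D₂, s (n + d) = 0 := by
  have hcard : #(univ : Finset (Fin E.order → ZMod 2)) < #A := by simpa using hA
  obtain ⟨D₁, h₁, D₂, h₂, hne, hinit⟩ := exists_ne_map_eq_of_card_lt_of_maps_to hcard
    (f := fun D (j : Fin E.order) => ∑ d ∈ D, s (j + d)) fun _ _ => mem_univ _
  have hsum : (fun n => ∑ d ∈ D₁, s (n + d)) = fun n => ∑ d ∈ D₂, s (n + d) :=
    (E.eq_iff_eqOn_range_order _ _ (hs.sum_shift D₁) (hs.sum_shift D₂)).2 fun n hn =>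
      congrFun hinit ⟨n, mem_range.1 hn⟩
  refine ⟨D₁, h₁, D₂, h₂, hne, fun n => ?_⟩
  rw [sum_symmDiff, congrFun hsum n, CharTwo.add_self_eq_zero]

end LinearRecurrence

theorem isLinRecOn_linComplexity (s : ℕ → ZMod 2) (N : ℕ) :
    IsLinRecOn s N (linComplexity s N) := by
  unfold linComplexity
  split_ifs with hzero
  · exact ⟨Fin.elim0, fun i hi => by simpa using hzero i (by omega)⟩
  · push Not at hzero
    obtain ⟨i, hi, -⟩ := hzero
    have hne : {L | 0 < L ∧ IsLinRecOn s N L}.Nonempty := ⟨N, by omega, 0, fun j hj => by omega⟩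
    exact (Nat.sInf_mem hne).2

theorem IsLinRecOn.exists_isSolution {s : ℕ → ZMod 2} {N L T : ℕ} (h : IsLinRecOn s N L)
    (hs : Periodic s T) (hT : 0 < T) (hN : T + L ≤ N) :
    ∃ c : Fin L → ZMod 2, (⟨L, c⟩ : LinearRecurrence (ZMod 2)).IsSolution s := by
  obtain ⟨c, hc⟩ := h
  exact ⟨c, LinearRecurrence.isSolution_of_periodic hs hT fun i hi => hc i (by omega)⟩

theorem neg_one_pow_sum_val_eq_one {ι : Type*} (I : Finset ι) (x : ι → ZMod 2)
    (h : ∑ i ∈ I, x i = 0) : (-1 : ℤ) ^ (∑ i ∈ I, (x i).val) = 1 := by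
  refine Even.neg_one_pow (ZMod.natCast_eq_zero_iff_even.1 ?_)
  push_cast
  simpa only [ZMod.natCast_val, ZMod.cast_id', id] using h

theorem natAbs_sum_neg_one_pow_le {ι : Type*} (I : Finset ι) (e : ι → ℕ) :
    (∑ i ∈ I, (-1 : ℤ) ^ e i).natAbs ≤ #I :=
  (Int.natAbs_sum_le _ _).trans (by simp)

theorem pcorr_card_eq_of_sum_eq_zero {s : ℕ → ZMod 2} {T : ℕ} {D : Finset ℕ}
    (hD : D ⊆ range T) (h : ∀ n < T, ∑ d ∈ D, s (n + d) = 0) : pcorr s T #D = T := by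
  refine IsGreatest.csSup_eq ⟨?_, ?_⟩
  · set emb := D.orderEmbOfFin rfl
    refine ⟨emb, emb.strictMono, fun j => mem_range.1 (hD (D.orderEmbOfFin_mem rfl j)), ?_⟩
    have hsum : ∀ n < T, ∑ j : Fin #D, s (n + emb j) = 0 := fun n hn => calc
      _ = ∑ e ∈ univ.map emb.toEmbedding, s (n + e) := (sum_map _ _ _).symm
      _ = 0 := by rw [D.map_orderEmbOfFin_univ rfl, h n hn]
    rw [sum_congr rfl fun n hn => neg_one_pow_sum_val_eq_one _ _ (hsum n (mem_range.1 hn))]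
    simp
  · rintro _ ⟨d, -, -, rfl⟩
    simpa using natAbs_sum_neg_one_pow_le (range T) _

theorem exists_pcorr_eq_of_sum_eq_zero {s : ℕ → ZMod 2} {T : ℕ} (hs : Periodic s T) (hT : 2 ≤ T)
    {D : Finset ℕ} (hD : D ⊆ range T) (hne : D.Nonempty) (h : ∀ n, ∑ d ∈ D, s (n + d) = 0) :
    ∃ k, 1 < k ∧ k ≤ max 2 #D ∧ pcorr s T k = T := by
  rcases Nat.lt_or_ge 1 #D with hD2 | hD1
  · exact ⟨#D, hD2, le_max_right _ _, pcorr_card_eq_of_sum_eq_zero hD fun n _ => h n⟩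
  obtain ⟨e, rfl⟩ := card_eq_one.1 (le_antisymm hD1 hne.card_pos)
  have he : e < T := mem_range.1 (hD (mem_singleton_self e))
  have hzero : ∀ n, s n = 0 := fun n => by
    rw [← hs n, show n + T = n + (T - e) + e by omega]
    simpa using h (n + (T - e))
  refine ⟨2, one_lt_two, le_max_left _ _, ?_⟩
  simpa using pcorr_card_eq_of_sum_eq_zero (range_subset_range.2 hT) fun n _ => by simp [hzero]

theorem two_pow_three_mul_lt_choose {ℓ : ℕ} (hℓ : 5 ≤ ℓ) : 2 ^ (3 * ℓ) < (2 ^ ℓ).choose 4 := by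
  obtain ⟨y, hy⟩ : ∃ y, 2 ^ ℓ = y + 32 :=
    ⟨2 ^ ℓ - 32, by have : 2 ^ 5 ≤ 2 ^ ℓ := Nat.pow_le_pow_right two_pos hℓ; omega⟩
  have hdesc : 24 * (2 ^ ℓ).choose 4 = (y + 32) * ((y + 31) * ((y + 30) * (y + 29))) := by
    rw [show 24 = (4 : ℕ).factorial from rfl, ← Nat.descFactorial_eq_factorial_mul_choose, hy]
    simp only [Nat.descFactorial, Nat.reduceSubDiff, Nat.add_one_sub_one, tsub_zero, mul_one]
    ring
  have hcube : 2 ^ (3 * ℓ) = (y + 32) ^ 3 := by rw [mul_comm, pow_mul, hy]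
  nlinarith [sq_nonneg y]

theorem card_powersetCard_three_union_four (T : ℕ) :
    #((range T).powersetCard 3 ∪ (range T).powersetCard 4) = (T + 1).choose 4 := by
  rw [card_union_of_disjoint (pairwise_disjoint_powersetCard _ (by norm_num)),
    card_powersetCard, card_powersetCard, card_range, Nat.choose_succ_succ]

/-- **3-term trace sequences.** For `ℓ ≥ 5`, a `(2^ℓ - 1)`-periodic binary sequence with
linear complexity at most `3ℓ` has a full peak in the periodic correlation measure of some
order `k` with `1 < k ≤ 9`. -/
theorem three_term_trace_peak (ℓ : ℕ) (hℓ : 5 ≤ ℓ) (s : ℕ → ZMod 2)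
    (hper : ∀ i, s (i + (2 ^ ℓ - 1)) = s i)
    (hL : linComplexity s (2 * (2 ^ ℓ - 1)) ≤ 3 * ℓ) :
    ∃ k, 1 < k ∧ k ≤ 9 ∧ pcorr s (2 ^ ℓ - 1) k = 2 ^ ℓ - 1 := by
  set T := 2 ^ ℓ - 1
  set L := linComplexity s (2 * T)
  set A := (range T).powersetCard 3 ∪ (range T).powersetCard 4
  have hT : 2 ≤ T := by have : 2 ^ 5 ≤ 2 ^ ℓ := Nat.pow_le_pow_right two_pos hℓ; omega
  have hmemA : ∀ D ∈ A, D ⊆ range T ∧ #D ≤ 4 := fun D hD => by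
    simp only [A, mem_union, mem_powersetCard] at hD
    rcases hD with ⟨hsub, hcard⟩ | ⟨hsub, hcard⟩ <;> exact ⟨hsub, by omega⟩
  have hA : 2 ^ L < #A := calc
    2 ^ L ≤ 2 ^ (3 * ℓ) := Nat.pow_le_pow_right two_pos hL
    _ < (2 ^ ℓ).choose 4 := two_pow_three_mul_lt_choose hℓ
    _ = #A := by rw [card_powersetCard_three_union_four, Nat.sub_add_cancel Nat.one_le_two_pow]
  have hLT : L < T := by
    refine (Nat.pow_lt_pow_iff_right one_lt_two).1 (hA.trans_le ?_)
    simpa using card_le_card fun D hD => mem_powerset.2 (hmemA D hD).1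
  obtain ⟨c, hc⟩ := (isLinRecOn_linComplexity s (2 * T)).exists_isSolution hper (by omega)
    (by omega)
  obtain ⟨D₁, hD₁, D₂, hD₂, hne, hsum⟩ :=
    LinearRecurrence.IsSolution.exists_ne_sum_symmDiff_eq_zero hc hA
  have hsub : D₁ ∆ D₂ ⊆ range T :=
    symmDiff_subset_union.trans (union_subset (hmemA D₁ hD₁).1 (hmemA D₂ hD₂).1)
  have hcard : #(D₁ ∆ D₂) ≤ 8 := by
    have := (card_le_card symmDiff_subset_union).trans (card_union_le D₁ D₂)
    linarith [(hmemA D₁ hD₁).2, (hmemA D₂ hD₂).2]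
  obtain ⟨k, hk, hk9, hpeak⟩ :=
    exists_pcorr_eq_of_sum_eq_zero hper hT hsub (symmDiff_nonempty.2 hne) hsum
  exact ⟨k, hk, hk9.trans (by omega), hpeak⟩
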